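/- Let Δ₅ ⊂ ℝ² be the triangle with vertices (0,0), (4,4√3), (0,4√3), and μ the measure with density x(−3x/2+√3y/2)(−x/2+√3y/2)(x/2+√3y/2)(3x/2+√3y/2)(√3 y) on Δ₅. Then μ(Δ₅) = 29952·√3. -/

import Mathlib

open MeasureTheory Real

noncomputable def dens (p : ℝ × ℝ) : ℝ :=
  p.1 * (-3 * p.1 / 2 + Real.sqrt 3 * p.2 / 2) * (-p.1 / 2 + Real.sqrt 3 * p.2 / 2) * (p.1 / 2 + Real.sqrt 3 * p.2 / 2) * (3 * p.1 / 2 + Real.sqrt 3 * p.2 / 2) * (Real.sqrt 3 * p.2)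

/-!
Cut the triangle into vertical slices `0 ≤ x ≤ 4`, `√3 x ≤ y ≤ 4√3` and integrate by Fubini.
Pairing the root factors, `(√3y/2)² - (3x/2)² = 3(y² - 3x²)/4` and `(√3y/2)² - (x/2)² = (3y² - x²)/4`,
so the density is the polynomial `3√3/16 · x · y (y² - 3x²)(3y² - x²)` and both iterated integrals
are integrals of polynomials.
-/

open Set

theorem setIntegral_prod_Icc_graph {α : Type*} [MeasurableSpace α] {μ : Measure α} [SFinite μ]
    {s : Set α} {f g : α → ℝ} {F : α × ℝ → ℝ} (hs : MeasurableSet s) (hf : Measurable f)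
    (hg : Measurable g)
    (hF : IntegrableOn F {p | p.1 ∈ s ∧ p.2 ∈ Icc (f p.1) (g p.1)} (μ.prod volume)) :
    ∫ p in {p | p.1 ∈ s ∧ p.2 ∈ Icc (f p.1) (g p.1)}, F p ∂μ.prod volume =
      ∫ x in s, (∫ y in Icc (f x) (g x), F (x, y)) ∂μ := by
  have hS : MeasurableSet {p : α × ℝ | p.1 ∈ s ∧ p.2 ∈ Icc (f p.1) (g p.1)} :=
    (measurable_fst hs).inter ((measurableSet_le (hf.comp measurable_fst) measurable_snd).inter
      (measurableSet_le measurable_snd (hg.comp measurable_fst)))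
  rw [← integral_indicator hS, integral_prod _ ((integrable_indicator_iff hS).2 hF),
    ← integral_indicator hs]
  congr 1 with x
  by_cases hx : x ∈ s
  · rw [indicator_of_mem hx, ← integral_indicator measurableSet_Icc]
    congr 1 with y
    simp [indicator, hx]
  · simp [hx]

theorem mem_convexHull_triple {E : Type*} [AddCommGroup E] [Module ℝ E] {x y z : E} {a b c : ℝ}
    (ha : 0 ≤ a) (hb : 0 ≤ b) (hc : 0 ≤ c) (habc : a + b + c = 1) :
    a • x + b • y + c • z ∈ convexHull ℝ {x, y, z} := by
  simpa [Fin.sum_univ_three, add_assoc] using (convex_convexHull ℝ {x, y, z}).sum_mem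
    (t := Finset.univ) (w := ![a, b, c]) (z := ![x, y, z])
    (by simp [Fin.forall_fin_succ, ha, hb, hc]) (by simp [Fin.sum_univ_three, habc])
    (by simp [Fin.forall_fin_succ, subset_convexHull ℝ _ _])

theorem convexHull_triangle_eq :
    (convexHull ℝ {((0:ℝ), (0:ℝ)), (4, 4 * √3), (0, 4 * √3)} : Set (ℝ × ℝ)) =
      {p | p.1 ∈ Icc 0 4 ∧ p.2 ∈ Icc (√3 * p.1) (4 * √3)} := by
  have hs : 0 < √3 := by positivity
  apply Subset.antisymm
  · refine convexHull_min ?_ ?_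
    · rintro p (rfl | rfl | rfl) <;> simp [hs.le, mul_comm]
    · rintro p ⟨⟨hp₀, hp₄⟩, hp₁, hp₂⟩ q ⟨⟨hq₀, hq₄⟩, hq₁, hq₂⟩ a b ha hb hab
      simp only [mem_ofPred_eq, mem_Icc, Prod.fst_add, Prod.snd_add, Prod.smul_fst,
        Prod.smul_snd, smul_eq_mul]
      refine ⟨⟨by positivity, by nlinarith⟩, by nlinarith, by nlinarith⟩
  · rintro ⟨x, y⟩ ⟨⟨hx₀, -⟩, hxy, hy⟩
    have h4s : 0 < 4 * √3 := by positivity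
    convert mem_convexHull_triple (x := ((0:ℝ), (0:ℝ))) (y := ((4:ℝ), 4 * √3))
      (z := ((0:ℝ), 4 * √3)) (a := 1 - y / (4 * √3)) (b := x / 4) (c := y / (4 * √3) - x / 4)
      (by rw [sub_nonneg, div_le_one h4s]; exact hy) (by positivity)
      (by rw [sub_nonneg, div_le_div_iff₀ (by norm_num) h4s]; nlinarith) (by ring) using 1
    ext
    · simp
    · simp only [Prod.snd_add, Prod.smul_snd, smul_eq_mul]
      field_simp
      ring

theorem continuous_dens : Continuous dens := by
  unfold dens; fun_prop

theorem dens_apply (x y : ℝ) :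
    dens (x, y) = 3 * √3 / 16 * x * (3 * y ^ 5 - 10 * x ^ 2 * y ^ 3 + 3 * x ^ 4 * y) := by
  have h3 : √3 ^ 2 = 3 := sq_sqrt (by norm_num)
  simp only [dens]
  linear_combination (√3 * x * y * ((√3 ^ 2 + 3) * y ^ 4 - 10 * x ^ 2 * y ^ 2) / 16) * h3

noncomputable def densMarginal (x : ℝ) : ℝ :=
  3 * √3 / 32 * (110592 * x - 11520 * x ^ 3 + 144 * x ^ 5 + 9 * x ^ 7)

theorem integral_dens_slice (x : ℝ) :
    ∫ y in √3 * x..4 * √3, dens (x, y) = densMarginal x := by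
  have h2 : √3 ^ 2 = 3 := sq_sqrt (by norm_num)
  have h4 : √3 ^ 4 = 9 := by rw [show 4 = 2 * 2 by rfl, pow_mul, h2]; norm_num
  have h6 : √3 ^ 6 = 27 := by rw [show 6 = 2 * 3 by rfl, pow_mul, h2]; norm_num
  simp_rw [dens_apply, intervalIntegral.integral_const_mul]
  rw [intervalIntegral.integral_add, intervalIntegral.integral_sub,
    intervalIntegral.integral_const_mul, intervalIntegral.integral_const_mul,
    intervalIntegral.integral_const_mul, integral_pow, integral_pow, integral_id]
  · simp only [densMarginal, mul_pow, h2, h4, h6]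
    ring
  all_goals exact (by fun_prop : Continuous _).intervalIntegrable _ _

theorem integral_densMarginal : ∫ x in (0:ℝ)..4, densMarginal x = 29952 * √3 := by
  unfold densMarginal
  rw [intervalIntegral.integral_const_mul, intervalIntegral.integral_add,
    intervalIntegral.integral_add, intervalIntegral.integral_sub,
    intervalIntegral.integral_const_mul, intervalIntegral.integral_const_mul,
    intervalIntegral.integral_const_mul, intervalIntegral.integral_const_mul,
    integral_pow, integral_pow, integral_pow, integral_id]
  · norm_num
    ring
  all_goals exact (by fun_prop : Continuous _).intervalIntegrable _ _

theorem stmt : ∫ p in (convexHull ℝ {((0:ℝ), (0:ℝ)), (4, 4 * Real.sqrt 3), (0, 4 * Real.sqrt 3)} : Set (ℝ × ℝ)), dens p ∂volume = 29952 * Real.sqrt 3 := by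
  have hInt : IntegrableOn dens
      (convexHull ℝ {((0:ℝ), (0:ℝ)), (4, 4 * √3), (0, 4 * √3)} : Set (ℝ × ℝ)) :=
    continuous_dens.continuousOn.integrableOn_compact ((toFinite _).isCompact_convexHull (𝕜 := ℝ))
  rw [convexHull_triangle_eq, Measure.volume_eq_prod] at hInt ⊢
  have hslice : ∀ x ∈ Icc (0:ℝ) 4, ∫ y in Icc (√3 * x) (4 * √3), dens (x, y) = densMarginal x :=
    fun x hx => by
      rw [integral_Icc_eq_integral_Ioc, ← intervalIntegral.integral_of_le
        (by nlinarith [hx.2, sqrt_nonneg 3]), integral_dens_slice]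
  rw [setIntegral_prod_Icc_graph measurableSet_Icc (by fun_prop) measurable_const hInt,
    setIntegral_congr_fun measurableSet_Icc hslice, integral_Icc_eq_integral_Ioc,
    ← intervalIntegral.integral_of_le (by norm_num), integral_densMarginal]
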